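/- Quantitative soundness claim: fix a derivation 𝒟 in Variable Normal Form, a model F of Ax, and an integer U with G(F) + lh(𝒟) ≤ U. Let 𝒟₀ ⊢ t = u be a sub-derivation of 𝒟, ρ an assignment with dom(ρ) ⊆ var(𝒟), and σ a sequence of updates based on F, U and 𝒟 with G(ρ), G(σ), E(σ), seqlh(σ) ≤ U − lh(𝒟₀). Then there exist sequences σ₁ and σ₂ of updates based on F, U and 𝒟 with E(σᵢ), seqlh(σᵢ) ≤ lh(𝒟₀) and G(σᵢ) ≤ max(G(F), G(σ), G(ρ)) + lh(𝒟₀), such that, setting F′ = F*σ, ⟦t⟧_{F,ρ} ⊑ ⟦u⟧_{F′*σ₁,ρ} and ⟦u⟧_{F,ρ} ⊑ ⟦t⟧_{F′*σ₂,ρ}. -/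

import Mathlib

namespace PETS

/-! ## Approximate values -/

/-- The set `𝔻` of approximate values: binary strings plus `*` (unknown). -/
inductive D where
  | eps  : D
  | b0   : D → D
  | b1   : D → D
  | star : D
deriving DecidableEq

instance : Zero D := ⟨D.star⟩

/-- The approximation relation `⊑` on `𝔻`. -/
inductive Approx : D → D → Prop where
  | star (v : D) : Approx .star v
  | eps : Approx .eps .eps
  | b0 {v w : D} : Approx v w → Approx (.b0 v) (.b0 w)
  | b1 {v w : D} : Approx v w → Approx (.b1 v) (.b1 w)

/-- Componentwise extension of `⊑` to tuples. -/
def TApprox {n : ℕ} (u v : Fin n → D) : Prop := ∀ i, Approx (u i) (v i)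

/-- Compatibility `u △ v`. -/
def Compat (u v : D) : Prop := Approx u v ∨ Approx v u

/-- Componentwise compatibility of tuples. -/
def TCompat {n : ℕ} (u v : Fin n → D) : Prop := ∀ i, Compat (u i) (v i)

/-- The gauge `G(v)` of an approximate value. -/
def D.gauge : D → ℕ
  | .eps => 1
  | .star => 1
  | .b0 v => v.gauge + 1
  | .b1 v => v.gauge + 1

/-- The gauge of a tuple of approximate values. -/
def tupGauge {n : ℕ} (v : Fin n → D) : ℕ := Finset.univ.sup fun i => (v i).gauge

open Classical in
/-- `maxapprx S`: the `⊑`-greatest element of `S` if it exists, else `*`.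
In particular `maxapprx ∅ = *`. -/
noncomputable def maxapprx (S : Set D) : D :=
  if h : ∃ m, m ∈ S ∧ ∀ v ∈ S, Approx v m then h.choose else D.star

/-! ## Generators and consistent sets -/

/-- A finite set of (potential) generators for `𝔻^n → 𝔻`. -/
abbrev Gens (n : ℕ) := Finset ((Fin n → D) × D)

/-- `f` is a consistent set of generators for `𝔻^n → 𝔻`:
all values are `≠ *` and compatible arguments have compatible values. -/
def ConsistentGens {n : ℕ} (f : Gens n) : Prop :=
  (∀ p ∈ f, p.2 ≠ D.star) ∧
  ∀ p ∈ f, ∀ q ∈ f, TCompat p.1 q.1 → Compat p.2 q.2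

/-- `f[x] = { v | ∃ w ⊑ x, (w ↦ v) ∈ f }`. -/
def gensAt {n : ℕ} (f : Gens n) (x : Fin n → D) : Set D :=
  {v | ∃ w : Fin n → D, TApprox w x ∧ (w, v) ∈ f}

/-- The finitely generated map `f(x) = maxapprx f[x]`. -/
noncomputable def applyGens {n : ℕ} (f : Gens n) (x : Fin n → D) : D :=
  maxapprx (gensAt f x)

/-! ## Terms -/

/-- Terms over the language: variables, the basic symbols `ε`, `s₀`, `s₁`, and
countably many non-basic function symbols `op k` of each arity `a`
(a non-basic symbol is identified by the pair `(k, a)`). -/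
inductive Tm where
  | var : ℕ → Tm
  | eps : Tm
  | s0 : Tm → Tm
  | s1 : Tm → Tm
  | app : (k : ℕ) → (a : ℕ) → (Fin a → Tm) → Tm

/-- The length (number of symbols) of a term. -/
def Tm.lh : Tm → ℕ
  | .var _ => 1
  | .eps => 1
  | .s0 t => t.lh + 1
  | .s1 t => t.lh + 1
  | .app _ a args => (Finset.univ.sum fun i : Fin a => (args i).lh) + 1

/-- The set of variables occurring in a term. -/
def Tm.vars : Tm → Finset ℕ
  | .var x => {x}
  | .eps => ∅
  | .s0 t => t.vars
  | .s1 t => t.vars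
  | .app _ a args => Finset.univ.biUnion fun i : Fin a => (args i).vars

/-- Substitution `t[u/x]` of the term `u` for the variable `x` in `t`. -/
def Tm.subst (t : Tm) (x : ℕ) (u : Tm) : Tm :=
  match t with
  | .var y => if y = x then u else .var y
  | .eps => .eps
  | .s0 s => .s0 (s.subst x u)
  | .s1 s => .s1 (s.subst x u)
  | .app k a args => .app k a fun i => (args i).subst x u

/-- Simultaneous substitution of terms for all variables. -/
def Tm.msubst (σ : ℕ → Tm) : Tm → Tm
  | .var x => σ x
  | .eps => .eps
  | .s0 t => .s0 (t.msubst σ)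
  | .s1 t => .s1 (t.msubst σ)
  | .app k a args => .app k a fun i => (args i).msubst σ

/-! ## Frames and assignments -/

/-- An entry of a frame: a non-basic symbol `(k, a)` together with a
generator `(arg, out)` for `𝔻^a → 𝔻`. -/
abbrev Entry := Σ _k : ℕ, Σ a : ℕ, (Fin a → D) × D

/-- A frame: a finite set of entries, i.e. a finite partial map from
non-basic function symbols to finite sets of generators. -/
abbrev Frame := Finset Entry

/-- `F(f)[x]` for the symbol `f = (k, a)`:
the set `{ v | ∃ w ⊑ x, (w ↦ v) ∈ F(f) }`. -/
def Frame.setAt (F : Frame) (k a : ℕ) (x : Fin a → D) : Set D :=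
  {v | ∃ w : Fin a → D, TApprox w x ∧ (⟨k, a, (w, v)⟩ : Entry) ∈ F}

/-- The evaluation `F(f)(x)` of the finitely generated map of the non-basic
symbol `f = (k, a)` in the frame `F`. -/
noncomputable def Frame.app (F : Frame) (k a : ℕ) (x : Fin a → D) : D :=
  maxapprx (F.setAt k a x)

/-- The gauge of a frame entry. -/
def Entry.gauge (e : Entry) : ℕ := max (tupGauge e.2.2.1) e.2.2.2.gauge

/-- The gauge `G(F)` of a frame. -/
def Frame.gauge (F : Frame) : ℕ := F.sup Entry.gauge

/-- A frame is consistent if each of its sections is a consistent set of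
generators (values `≠ *`, compatible arguments have compatible values). -/
def Frame.Consistent (F : Frame) : Prop :=
  (∀ (k a : ℕ) (w : Fin a → D) (v : D), (⟨k, a, (w, v)⟩ : Entry) ∈ F → v ≠ D.star) ∧
  (∀ (k a : ℕ) (w w' : Fin a → D) (v v' : D),
    (⟨k, a, (w, v)⟩ : Entry) ∈ F → (⟨k, a, (w', v')⟩ : Entry) ∈ F →
    TCompat w w' → Compat v v')

/-- An assignment: a finitely supported map from variables to `𝔻`
(where the zero of `𝔻` is `*`, i.e. `ρ(x) = *` outside the domain). -/
abbrev Assignment := ℕ →₀ D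

/-- The gauge `G(ρ)` of an assignment. -/
noncomputable def Assignment.gauge (ρ : Assignment) : ℕ :=
  ρ.support.sup fun x => (ρ x).gauge

/-- The evaluation `⟦t⟧_{F,ρ}` of a term under a frame and an assignment:
basic symbols are evaluated as themselves, non-basic symbols via their
finitely generated maps. -/
noncomputable def eval (F : Frame) (ρ : Assignment) : Tm → D
  | .var x => ρ x
  | .eps => D.eps
  | .s0 t => D.b0 (eval F ρ t)
  | .s1 t => D.b1 (eval F ρ t)
  | .app k a args => F.app k a fun i => eval F ρ (args i)

/-! ## Nice axiom systems -/

/-- A generalized variable: a variable, `ε`, `s₀(x)` or `s₁(x)`. -/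
inductive GVar where
  | var : ℕ → GVar
  | eps : GVar
  | s0 : ℕ → GVar
  | s1 : ℕ → GVar
deriving DecidableEq

/-- The term denoted by a generalized variable. -/
def GVar.toTm : GVar → Tm
  | .var x => .var x
  | .eps => .eps
  | .s0 x => .s0 (.var x)
  | .s1 x => .s1 (.var x)

/-- The variables of a generalized variable. -/
def GVar.vars : GVar → Finset ℕ
  | .var x => {x}
  | .eps => ∅
  | .s0 x => {x}
  | .s1 x => {x}

/-- Applying an assignment to a generalized variable,
e.g. `ρ(sᵢ(x)) = sᵢ(ρ(x))`. -/
def GVar.evalA (ρ : Assignment) : GVar → D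
  | .var x => ρ x
  | .eps => D.eps
  | .s0 x => D.b0 (ρ x)
  | .s1 x => D.b1 (ρ x)

/-- Unifiability of two generalized variables (they have a common
substitution instance). -/
def GVar.unif : GVar → GVar → Prop
  | .var _, _ => True
  | _, .var _ => True
  | .eps, .eps => True
  | .s0 _, .s0 _ => True
  | .s1 _, .s1 _ => True
  | _, _ => False

/-- An axiom: an equation `f(t₁,…,tₐ) = rhs` where `f` is the non-basic
symbol `(k, a)` and each `tᵢ` is a generalized variable. -/
structure Axm where
  k : ℕ
  a : ℕ
  args : Fin a → GVar
  rhs : Tm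

/-- The left-hand side term `f(t₁,…,tₐ)` of an axiom. -/
def Axm.lhs (A : Axm) : Tm := .app A.k A.a fun i => (A.args i).toTm

/-- The variables of the left-hand side of an axiom. -/
def Axm.lhsVars (A : Axm) : Finset ℕ := Finset.univ.biUnion fun i => (A.args i).vars

/-- All variables of an axiom. -/
def Axm.vars (A : Axm) : Finset ℕ := A.lhsVars ∪ A.rhs.vars

/-- A nice set of axioms: each axiom has the form `f(x⃗) = t`, `f(ε,x⃗) = t`,
`f(x0,x⃗) = t` or `f(x1,x⃗) = t` (so all arguments beyond the first are plain
variables), the variables on the left are pairwise distinct, the right-hand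
side variables occur on the left, and no left-hand side occurs twice among
the axioms, also modulo substitution. -/
structure NiceAxioms (Ax : Set Axm) : Prop where
  shape : ∀ A ∈ Ax, ∀ i : Fin A.a, 0 < (i : ℕ) → ∃ x, A.args i = GVar.var x
  distinct : ∀ A ∈ Ax, ∀ i j : Fin A.a, i ≠ j → Disjoint ((A.args i).vars) ((A.args j).vars)
  rhsVars : ∀ A ∈ Ax, A.rhs.vars ⊆ A.lhsVars
  unique : ∀ A ∈ Ax, ∀ B ∈ Ax, A.k = B.k → ∀ h : A.a = B.a,
    (∀ i : Fin A.a, GVar.unif (A.args i) (B.args (Fin.cast h i))) → A = B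

/-! ## Derivations in PETS(Ax) -/

/-- Derivations of the pure equational theory with substitution `PETS(Ax)`:
`Deriv Ax t u` is the type of derivations ending in the equation `t = u`. -/
inductive Deriv (Ax : Set Axm) : Tm → Tm → Type where
  | ax (A : Axm) (hA : A ∈ Ax) (σ : ℕ → Tm) :
      Deriv Ax (A.lhs.msubst σ) (A.rhs.msubst σ)
  | refl (t : Tm) : Deriv Ax t t
  | symm {t u : Tm} (d : Deriv Ax u t) : Deriv Ax t u
  | trans {t s u : Tm} (d₁ : Deriv Ax t s) (d₂ : Deriv Ax s u) : Deriv Ax t u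
  | compat {t u : Tm} (s : Tm) (x : ℕ) (d : Deriv Ax t u) :
      Deriv Ax (s.subst x t) (s.subst x u)
  | subst {t u : Tm} (s : Tm) (x : ℕ) (d : Deriv Ax t u) :
      Deriv Ax (t.subst x s) (u.subst x s)

namespace Deriv

variable {Ax : Set Axm}

/-- The length `lh(𝒟)` of a derivation: the sum of the lengths of the
equations occurring in it plus the length of the additional syntax
identifying rule applications. -/
def lh : {a b : Tm} → Deriv Ax a b → ℕ
  | _, _, .ax A _ σ => (A.lhs.msubst σ).lh + (A.rhs.msubst σ).lh + 1
  | _, _, .refl t => t.lh + t.lh + 1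
  | a, b, .symm d => d.lh + (a.lh + b.lh + 1)
  | a, b, .trans d₁ d₂ => d₁.lh + d₂.lh + (a.lh + b.lh + 1)
  | _, _, @Deriv.compat _ t u s x d =>
      d.lh + ((s.subst x t).lh + (s.subst x u).lh + 1) + (s.lh + 1 + 1)
  | _, _, @Deriv.subst _ t u s x d =>
      d.lh + ((t.subst x s).lh + (u.subst x s).lh + 1)
        + (t.lh + s.lh + 1 + u.lh + s.lh + 1 + 2)

/-- The set of variables occurring in a derivation. -/
def varsOf : {a b : Tm} → Deriv Ax a b → Finset ℕ
  | _, _, .ax A _ σ => (A.lhs.msubst σ).vars ∪ (A.rhs.msubst σ).vars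
  | _, _, .refl t => t.vars
  | _, _, .symm d => d.varsOf
  | _, _, .trans d₁ d₂ => d₁.varsOf ∪ d₂.varsOf
  | _, _, @Deriv.compat _ _ _ s x d => d.varsOf ∪ s.vars ∪ {x}
  | _, _, @Deriv.subst _ _ _ s x d => d.varsOf ∪ s.vars ∪ {x}

/-- The list (with multiplicities) of variables of a derivation bound by
applications of the Substitution rule. -/
def bvars : {a b : Tm} → Deriv Ax a b → List ℕ
  | _, _, .ax _ _ _ => []
  | _, _, .refl _ => []
  | _, _, .symm d => d.bvars
  | _, _, .trans d₁ d₂ => d₁.bvars ++ d₂.bvars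
  | _, _, .compat _ _ d => d.bvars
  | _, _, @Deriv.subst _ _ _ _ x d => x :: d.bvars

/-- The set of axioms of `Ax` occurring (i.e. used by an Axiom rule) in a
derivation. -/
def axiomsUsed : {a b : Tm} → Deriv Ax a b → Set Axm
  | _, _, .ax A _ _ => {A}
  | _, _, .refl _ => ∅
  | _, _, .symm d => d.axiomsUsed
  | _, _, .trans d₁ d₂ => d₁.axiomsUsed ∪ d₂.axiomsUsed
  | _, _, .compat _ _ d => d.axiomsUsed
  | _, _, .subst _ _ d => d.axiomsUsed

/-- A substitution is an injective renaming of the variables of an axiom. -/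
def InjRenaming (A : Axm) (σ : ℕ → Tm) : Prop :=
  (∀ x ∈ A.vars, ∃ y, σ x = Tm.var y) ∧ Set.InjOn σ ↑A.vars

/-- Condition (1) of Variable Normal Form: every application of the Axiom
rule is an injective renaming of an axiom. -/
def VNFax : {a b : Tm} → Deriv Ax a b → Prop
  | _, _, .ax A _ σ => InjRenaming A σ
  | _, _, .refl _ => True
  | _, _, .symm d => d.VNFax
  | _, _, .trans d₁ d₂ => d₁.VNFax ∧ d₂.VNFax
  | _, _, .compat _ _ d => d.VNFax
  | _, _, .subst _ _ d => d.VNFax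

/-- Variable Normal Form: every Axiom rule application is an injective
renaming of an axiom in `Ax`, and every variable occurring in the derivation
either occurs in the final equation or is bound by exactly one application
of the Substitution rule. -/
def VNF {a b : Tm} (d : Deriv Ax a b) : Prop :=
  d.VNFax ∧ ∀ x ∈ d.varsOf, x ∈ a.vars ∪ b.vars ∨ d.bvars.count x = 1

end Deriv

/-! ## Models, updates, update sequences -/

/-- `F` is a model of `Ax`: for every axiom `t = u` in `Ax` and every
assignment `ρ`, `⟦t⟧_{F,ρ} ⊑ ⟦u⟧_{F,ρ}`. -/
def IsModel (F : Frame) (Ax : Set Axm) : Prop :=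
  ∀ A ∈ Ax, ∀ ρ : Assignment, Approx (eval F ρ A.lhs) (eval F ρ A.rhs)

/-- `F` is a `κ`-model of the derivation `d`: `F` is a frame (its sections
are consistent sets) with `G(F) ≤ κ`, and for every axiom `t = u` of `Ax`
occurring in `d` and every assignment `ρ` with `dom(ρ) ⊆ var(d)` and
`G(ρ) ≤ κ`, we have `⟦t⟧_{F,ρ} ⊑ ⟦u⟧_{F,ρ}`. -/
def IsKModel {Ax : Set Axm} {a b : Tm} (F : Frame) (κ : ℕ) (d : Deriv Ax a b) : Prop :=
  F.Consistent ∧ F.gauge ≤ κ ∧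
  ∀ A ∈ d.axiomsUsed, ∀ ρ : Assignment,
    ↑ρ.support ⊆ (↑d.varsOf : Set ℕ) → ρ.gauge ≤ κ →
    Approx (eval F ρ A.lhs) (eval F ρ A.rhs)

/-- An update `f : v⃗ ↦ w` for the non-basic symbol `f = (k, a)`. -/
structure Upd where
  k : ℕ
  a : ℕ
  v : Fin a → D
  w : D

/-- The gauge `G(v⃗, w)` of an update. -/
def Upd.gauge (u : Upd) : ℕ := max (tupGauge u.v) u.w.gauge

/-- The frame entry corresponding to an update. -/
def Upd.entry (u : Upd) : Entry := ⟨u.k, u.a, (u.v, u.w)⟩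

/-- `F * (f : v⃗ ↦ w)`: the frame `F` updated by the update. -/
noncomputable def Frame.apUpd (F : Frame) (u : Upd) : Frame := insert u.entry F

/-- `F * σ` for a sequence of updates `σ`. -/
noncomputable def Frame.apSeq (F : Frame) (σ : List Upd) : Frame :=
  σ.foldl Frame.apUpd F

/-- `u` is an update based on `F`, `κ` and `d`: a generator `v⃗ ↦ w` with
`G(v⃗, w) ≤ κ` for a non-basic symbol `f`, obtained from an axiom
`f(t⃗) = u'` of `Ax` occurring in `d` and an assignment `ρ` by
`vᵢ = ρ(tᵢ)` and `w = ⟦u'⟧_{F,ρ}`. -/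
def IsUpdate {Ax : Set Axm} {a b : Tm} (F : Frame) (κ : ℕ) (d : Deriv Ax a b)
    (u : Upd) : Prop :=
  u.w ≠ D.star ∧ u.gauge ≤ κ ∧
  ∃ A ∈ d.axiomsUsed, ∃ ρ : Assignment,
    u = ⟨A.k, A.a, fun i => (A.args i).evalA ρ, eval F ρ A.rhs⟩

/-- `σ` is a sequence of updates based on `F`, `κ` and `d`: each update in
the sequence is an update based on the frame produced so far. -/
def IsUpdSeq {Ax : Set Axm} {a b : Tm} (κ : ℕ) (d : Deriv Ax a b) :
    Frame → List Upd → Prop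
  | _, [] => True
  | F, u :: σ => IsUpdate F κ d u ∧ IsUpdSeq κ d (F.apUpd u) σ

/-- The gauge `G(σ)` of a sequence of updates. -/
def seqGauge (σ : List Upd) : ℕ := (σ.map Upd.gauge).foldr max 0

/-- The extent `E(σ)` of a sequence of updates (maximal arity used). -/
def seqExt (σ : List Upd) : ℕ := (σ.map Upd.a).foldr max 0

/-! ## Instructions -/

/-- Instructions: `A[t→u]`, `A[t←u]` for axiom (instances) `t = u`, and
`S↑[t,s/x]`, `S↓[t,s/x]` for terms `t, s` and a variable `x`. -/
inductive Instr where
  | axF : Tm → Tm → Instr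
  | axB : Tm → Tm → Instr
  | sUp : Tm → Tm → ℕ → Instr
  | sDown : Tm → Tm → ℕ → Instr

/-- The length of an instruction. -/
def Instr.lh : Instr → ℕ
  | .axF t u => t.lh + u.lh + 1
  | .axB t u => t.lh + u.lh + 1
  | .sUp t s _ => t.lh + s.lh + 1
  | .sDown t s _ => t.lh + s.lh + 1

/-- The length of a sequence of instructions. -/
def instrsLh (τ : List Instr) : ℕ := (τ.map Instr.lh).sum

/-- An instruction is *for* the derivation `d` if its axiom instructions
carry (injective renamings of) axioms occurring in `d`. -/
def Instr.For {Ax : Set Axm} {a b : Tm} (d : Deriv Ax a b) : Instr → Prop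
  | .axF t u => ∃ A ∈ d.axiomsUsed, ∃ σ : ℕ → Tm,
      Deriv.InjRenaming A σ ∧ t = A.lhs.msubst σ ∧ u = A.rhs.msubst σ
  | .axB t u => ∃ A ∈ d.axiomsUsed, ∃ σ : ℕ → Tm,
      Deriv.InjRenaming A σ ∧ t = A.lhs.msubst σ ∧ u = A.rhs.msubst σ
  | .sUp _ _ _ => True
  | .sDown _ _ _ => True

/-- The instruction sequences `→Inst_𝒟` (first component) and `←Inst_𝒟`
(second component) extracted from a derivation. -/
def Deriv.insts {Ax : Set Axm} : {a b : Tm} → Deriv Ax a b → List Instr × List Instr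
  | _, _, .ax A _ σ =>
      ([.axF (A.lhs.msubst σ) (A.rhs.msubst σ)],
       [.axB (A.lhs.msubst σ) (A.rhs.msubst σ)])
  | _, _, .refl _ => ([], [])
  | _, _, .symm d => (d.insts.2, d.insts.1)
  | _, _, .trans d₁ d₂ => (d₁.insts.1 ++ d₂.insts.1, d₂.insts.2 ++ d₁.insts.2)
  | _, _, .compat _ _ d => d.insts
  | _, _, @Deriv.subst _ t u s x d =>
      (Instr.sUp t s x :: (d.insts.1 ++ [Instr.sDown u s x]),
       Instr.sUp u s x :: (d.insts.2 ++ [Instr.sDown t s x]))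

/-- `Ψ(t ← u, ⟨F, ρ⟩)`: for `t` of the form `f(t⃗)`, the update `f : v⃗ ↦ w`
with `vᵢ = ρ(tᵢ)` and `w = ⟦u⟧_{F,ρ}`. -/
noncomputable def Psi (t u : Tm) (F : Frame) (ρ : Assignment) : Upd :=
  match t with
  | .app k a args => ⟨k, a, fun i => eval F ρ (args i), eval F ρ u⟩
  | _ => ⟨0, 0, Fin.elim0, eval F ρ u⟩

/-- One step of the state transformer `Φ` (the frame `F` is the fixed base
frame; the state consists of the update sequence so far and the current
assignment). -/
noncomputable def PhiStep (F : Frame) (st : List Upd × Assignment) :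
    Instr → List Upd × Assignment
  | .axF _ _ => st
  | .axB t u => (st.1 ++ [Psi t u (F.apSeq st.1) st.2], st.2)
  | .sUp _ s x => (st.1, Finsupp.update st.2 x (eval (F.apSeq st.1) st.2 s))
  | .sDown _ _ x => (st.1, st.2.erase x)

/-- The state transformer `Φ(τ, ⟨F, σ, ρ⟩) = ⟨F, σ', ρ'⟩`, processing the
instruction sequence `τ` from left to right. -/
noncomputable def Phi (F : Frame) (τ : List Instr) (st : List Upd × Assignment) :
    List Upd × Assignment :=
  τ.foldl (PhiStep F) st

/-! ## Sub-derivations -/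

/-- `SubDeriv e d`: `e` is a sub-derivation of `d`. -/
inductive SubDeriv {Ax : Set Axm} :
    {a b c d : Tm} → Deriv Ax a b → Deriv Ax c d → Prop where
  | refl {a b : Tm} (d : Deriv Ax a b) : SubDeriv d d
  | symm {a b t u : Tm} {e : Deriv Ax a b} {d : Deriv Ax u t} :
      SubDeriv e d → SubDeriv e (Deriv.symm d)
  | transL {a b t s u : Tm} {e : Deriv Ax a b} {d₁ : Deriv Ax t s} {d₂ : Deriv Ax s u} :
      SubDeriv e d₁ → SubDeriv e (Deriv.trans d₁ d₂)
  | transR {a b t s u : Tm} {e : Deriv Ax a b} {d₁ : Deriv Ax t s} {d₂ : Deriv Ax s u} :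
      SubDeriv e d₂ → SubDeriv e (Deriv.trans d₁ d₂)
  | compat {a b t u : Tm} (s : Tm) (x : ℕ) {e : Deriv Ax a b} {d : Deriv Ax t u} :
      SubDeriv e d → SubDeriv e (Deriv.compat s x d)
  | subst {a b t u : Tm} (s : Tm) (x : ℕ) {e : Deriv Ax a b} {d : Deriv Ax t u} :
      SubDeriv e d → SubDeriv e (Deriv.subst s x d)

/-!
The claim is proved for all derivations `d ⊢ t = u` at once, in a form where the frame and the
gauge bound vary (`ApproxByUpdates`): from any consistent model `G` and assignment `ρ` of gauge
at most `M`, both `⟦t⟧ ⊑ ⟦u⟧` and `⟦u⟧ ⊑ ⟦t⟧` are reached after at most `lh(d)` updates of gauge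
at most `M + lh(d)`. Only the Axiom rule read from right to left needs an update, namely the
generator `f(ρ(t⃗)) ↦ ⟦rhs⟧` itself. Symmetry swaps the two directions, Transitivity concatenates
the two sequences (the second one starts from the frame produced by the first, which is why the
frame varies), and Compatibility and Substitution reuse the sequence by monotonicity of evaluation.

Updates keep a frame a consistent model because the axioms are nice. If an old generator
`w⃗ ↦ v` has arguments compatible with those of the new one `ρ₀(t⃗) ↦ w`, left-linearity yields
`ρ₁ ⊒ ρ₀` with `w⃗ ⊑ ρ₁(t⃗)`, and then `v` and `w` both lie below `⟦rhs⟧` at `ρ₁`. Since no two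
left-hand sides unify, the new generator only fires on instances of the axiom it came from.

Finally, a sequence of updates based on `F` evaluates at least as high when applied on top of
`F * σ`, which gives the statement for `F' = F * σ`.
-/

theorem Approx.refl : ∀ v : D, Approx v v
  | .eps => .eps
  | .star => .star _
  | .b0 v => .b0 (Approx.refl v)
  | .b1 v => .b1 (Approx.refl v)

theorem Approx.trans {a b c : D} (hab : Approx a b) (hbc : Approx b c) : Approx a c := by
  induction hab generalizing c with
  | star => exact .star c
  | eps => exact hbc
  | b0 _ ih => cases hbc with | b0 hbc => exact .b0 (ih hbc)
  | b1 _ ih => cases hbc with | b1 hbc => exact .b1 (ih hbc)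

theorem Approx.antisymm {a b : D} (hab : Approx a b) (hba : Approx b a) : a = b := by
  induction hab with
  | star => cases hba; rfl
  | eps => rfl
  | b0 _ ih => cases hba with | b0 hba => rw [ih hba]
  | b1 _ ih => cases hba with | b1 hba => rw [ih hba]

instance : PartialOrder D where
  le := Approx
  le_refl := Approx.refl
  le_trans _ _ _ := Approx.trans
  le_antisymm _ _ := Approx.antisymm

theorem compat_of_approx_of_approx {a b c : D} (hac : Approx a c) (hbc : Approx b c) :
    Compat a b := by
  induction hac generalizing b with
  | star => exact Or.inl (.star b)
  | eps => cases hbc with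
    | star => exact Or.inr (.star _)
    | eps => exact Or.inl .eps
  | b0 _ ih => cases hbc with
    | star => exact Or.inr (.star _)
    | b0 hbc => exact (ih hbc).imp .b0 .b0
  | b1 _ ih => cases hbc with
    | star => exact Or.inr (.star _)
    | b1 hbc => exact (ih hbc).imp .b1 .b1

theorem exists_greatest_of_compat {S : Set D} (hfin : S.Finite) (hne : S.Nonempty)
    (hS : ∀ a ∈ S, ∀ b ∈ S, Compat a b) : ∃ m ∈ S, ∀ v ∈ S, Approx v m := by
  obtain ⟨m, hm⟩ := hfin.exists_maximal hne
  exact ⟨m, hm.1, fun v hv => (hS v hv m hm.1).elim id (hm.2 hv)⟩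

theorem maxapprx_eq {S : Set D} {m : D} (hm : m ∈ S) (hmax : ∀ v ∈ S, Approx v m) :
    maxapprx S = m := by
  have h : ∃ m, m ∈ S ∧ ∀ v ∈ S, Approx v m := ⟨m, hm, hmax⟩
  rw [maxapprx, dif_pos h]
  exact Approx.antisymm (hmax _ h.choose_spec.1) (h.choose_spec.2 m hm)

theorem maxapprx_mem_or_eq_star (S : Set D) : maxapprx S ∈ S ∨ maxapprx S = D.star := by
  unfold maxapprx
  split
  · next h => exact Or.inl h.choose_spec.1
  · exact Or.inr rfl

namespace Frame

theorem setAt_mono {F G : Frame} (hFG : F ⊆ G) {k a : ℕ} {x y : Fin a → D}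
    (hxy : TApprox x y) : F.setAt k a x ⊆ G.setAt k a y := by
  rintro v ⟨w, hw, hmem⟩
  exact ⟨w, fun i => (hw i).trans (hxy i), hFG hmem⟩

theorem setAt_finite (F : Frame) (k a : ℕ) (x : Fin a → D) : (F.setAt k a x).Finite := by
  refine (F.image fun e => e.2.2.2).finite_toSet.subset ?_
  rintro v ⟨w, -, hmem⟩
  exact Finset.mem_image.mpr ⟨_, hmem, rfl⟩

theorem approx_app {F : Frame} (hFc : F.Consistent) {k a : ℕ} {x : Fin a → D} {v : D}
    (hv : v ∈ F.setAt k a x) : Approx v (F.app k a x) := by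
  have hcompat : ∀ v ∈ F.setAt k a x, ∀ v' ∈ F.setAt k a x, Compat v v' := by
    rintro v ⟨w, hw, hmem⟩ v' ⟨w', hw', hmem'⟩
    exact hFc.2 k a w w' v v' hmem hmem' fun i => compat_of_approx_of_approx (hw i) (hw' i)
  obtain ⟨m, hm, hmax⟩ := exists_greatest_of_compat (F.setAt_finite k a x) ⟨v, hv⟩ hcompat
  rw [Frame.app, maxapprx_eq hm hmax]
  exact hmax v hv

theorem app_approx_of_forall {F : Frame} {k a : ℕ} {x : Fin a → D} {y : D}
    (h : ∀ v ∈ F.setAt k a x, Approx v y) : Approx (F.app k a x) y := by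
  rcases maxapprx_mem_or_eq_star (F.setAt k a x) with hm | hm
  · exact h _ hm
  · rw [Frame.app, hm]
    exact .star y

theorem app_mono {F G : Frame} (hGc : G.Consistent) (hFG : F ⊆ G) {k a : ℕ}
    {x y : Fin a → D} (hxy : TApprox x y) : Approx (F.app k a x) (G.app k a y) :=
  app_approx_of_forall fun _ hv => approx_app hGc (setAt_mono hFG hxy hv)

theorem gauge_le_of_mem {F : Frame} {k a : ℕ} {w : Fin a → D} {v : D}
    (h : (⟨k, a, (w, v)⟩ : Entry) ∈ F) : v.gauge ≤ F.gauge :=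
  (le_max_right _ _).trans (Finset.le_sup (f := Entry.gauge) h)

theorem gauge_app_le (F : Frame) (k a : ℕ) (x : Fin a → D) :
    (F.app k a x).gauge ≤ max F.gauge 1 := by
  rcases maxapprx_mem_or_eq_star (F.setAt k a x) with h | h
  · obtain ⟨w, -, hmem⟩ := h
    exact le_max_of_le_left (gauge_le_of_mem hmem)
  · rw [Frame.app, h]
    exact le_max_right _ _

theorem subset_apSeq : ∀ (F : Frame) (σ : List Upd), F ⊆ F.apSeq σ
  | _, [] => subset_rfl
  | _, _ :: σ => (Finset.subset_insert _ _).trans (subset_apSeq _ σ)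

theorem apSeq_append (F : Frame) (σ τ : List Upd) :
    F.apSeq (σ ++ τ) = (F.apSeq σ).apSeq τ :=
  List.foldl_append

theorem gauge_apSeq_le : ∀ (F : Frame) (σ : List Upd),
    (F.apSeq σ).gauge ≤ max F.gauge (seqGauge σ)
  | F, [] => le_max_left _ _
  | F, u :: σ => by
    have hu : (F.apUpd u).gauge = max u.gauge F.gauge := Finset.sup_insert
    have := gauge_apSeq_le (F.apUpd u) σ
    change ((F.apUpd u).apSeq σ).gauge ≤ _
    simp only [seqGauge, List.map_cons, List.foldr_cons] at this ⊢
    omega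

end Frame

theorem Assignment.gauge_apply_le (ρ : Assignment) (x : ℕ) : (ρ x).gauge ≤ max ρ.gauge 1 := by
  by_cases h : x ∈ ρ.support
  · exact le_max_of_le_left (Finset.le_sup (f := fun x => (ρ x).gauge) h)
  · rw [Finsupp.notMem_support_iff.mp h]
    exact le_max_right _ _

theorem Assignment.gauge_update_le (ρ : Assignment) (x : ℕ) (v : D) :
    Assignment.gauge (Finsupp.update ρ x v) ≤ max ρ.gauge v.gauge := by
  refine Finset.sup_le fun y hy => ?_
  rcases eq_or_ne y x with rfl | hne
  · simp
  · have hy' : y ∈ ρ.support :=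
      (Finset.mem_insert.mp (Finsupp.support_update_subset ρ x hy)).resolve_left hne
    rw [Finsupp.update_apply, if_neg hne]
    exact le_max_of_le_left (Finset.le_sup (f := fun x => (ρ x).gauge) hy')

theorem approx_update (ρ : Assignment) (x : ℕ) {v v' : D} (hv : Approx v v') (y : ℕ) :
    Approx (Finsupp.update ρ x v y) (Finsupp.update ρ x v' y) := by
  rcases eq_or_ne y x with rfl | hne
  · simpa using hv
  · simpa [Finsupp.update_apply, hne] using Approx.refl (ρ y)

theorem approx_update_of_approx {ρ : Assignment} {x : ℕ} {v : D} (h : Approx (ρ x) v)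
    (y : ℕ) : Approx (ρ y) (Finsupp.update ρ x v y) := by
  rcases eq_or_ne y x with rfl | hne
  · simpa using h
  · simpa [Finsupp.update_apply, hne] using Approx.refl (ρ y)

theorem Tm.one_le_lh : ∀ t : Tm, 1 ≤ t.lh := by
  intro t; cases t <;> simp only [Tm.lh] <;> omega

theorem Tm.lh_lt_lh_app (k a : ℕ) (args : Fin a → Tm) (i : Fin a) :
    (args i).lh < (Tm.app k a args).lh :=
  Nat.lt_succ_of_le (Finset.single_le_sum (fun j _ => Nat.zero_le (args j).lh) (Finset.mem_univ i))

theorem Tm.arity_lt_lh_app (k a : ℕ) (args : Fin a → Tm) : a < (Tm.app k a args).lh := by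
  have := Finset.card_nsmul_le_sum Finset.univ (fun i => (args i).lh) 1
    fun i _ => (args i).one_le_lh
  simp only [Finset.card_univ, Fintype.card_fin, smul_eq_mul, mul_one] at this
  simp only [Tm.lh]
  omega

theorem eval_mono {F G : Frame} (hGc : G.Consistent) (hFG : F ⊆ G) {ρ ρ' : Assignment} :
    ∀ {t : Tm}, (∀ x ∈ t.vars, Approx (ρ x) (ρ' x)) → Approx (eval F ρ t) (eval G ρ' t)
  | .var x, h => h x (Finset.mem_singleton_self x)
  | .eps, _ => .eps
  | .s0 _, h => .b0 (eval_mono hGc hFG h)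
  | .s1 _, h => .b1 (eval_mono hGc hFG h)
  | .app _ _ _, h => Frame.app_mono hGc hFG fun i =>
      eval_mono hGc hFG fun x hx => h x (Finset.mem_biUnion.mpr ⟨i, Finset.mem_univ i, hx⟩)

theorem eval_mono_frame {F G : Frame} (hGc : G.Consistent) (hFG : F ⊆ G) (ρ : Assignment)
    (t : Tm) : Approx (eval F ρ t) (eval G ρ t) :=
  eval_mono hGc hFG fun x _ => Approx.refl (ρ x)

theorem gauge_eval_le (F : Frame) (ρ : Assignment) :
    ∀ t : Tm, (eval F ρ t).gauge ≤ max F.gauge ρ.gauge + t.lh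
  | .var x => by
    have := ρ.gauge_apply_le x
    simp only [eval, Tm.lh]
    omega
  | .eps => by simp [eval, Tm.lh, D.gauge]
  | .s0 t => by
    have := gauge_eval_le F ρ t
    simp only [eval, Tm.lh, D.gauge]
    omega
  | .s1 t => by
    have := gauge_eval_le F ρ t
    simp only [eval, Tm.lh, D.gauge]
    omega
  | .app k a args => by
    have := F.gauge_app_le k a fun i => eval F ρ (args i)
    simp only [eval, Tm.lh]
    omega

theorem eval_msubst {F : Frame} {ρ ρ' : Assignment} {σ : ℕ → Tm} :
    ∀ {t : Tm}, (∀ x ∈ t.vars, eval F ρ (σ x) = ρ' x) → eval F ρ (t.msubst σ) = eval F ρ' t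
  | .var x, h => h x (Finset.mem_singleton_self x)
  | .eps, _ => rfl
  | .s0 _, h => congrArg D.b0 (eval_msubst h)
  | .s1 _, h => congrArg D.b1 (eval_msubst h)
  | .app k a _, h => congrArg (F.app k a) <| funext fun i =>
      eval_msubst fun x hx => h x (Finset.mem_biUnion.mpr ⟨i, Finset.mem_univ i, hx⟩)

theorem eval_subst (F : Frame) (ρ : Assignment) (x : ℕ) (s : Tm) :
    ∀ t : Tm, eval F ρ (t.subst x s) = eval F (Finsupp.update ρ x (eval F ρ s)) t
  | .var y => by
    rcases eq_or_ne y x with rfl | hne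
    · simp [Tm.subst, eval]
    · simp [Tm.subst, eval, Finsupp.update_apply, hne]
  | .eps => rfl
  | .s0 t => congrArg D.b0 (eval_subst F ρ x s t)
  | .s1 t => congrArg D.b1 (eval_subst F ρ x s t)
  | .app k a args => congrArg (F.app k a) <| funext fun i => eval_subst F ρ x s (args i)

theorem eval_toTm (F : Frame) (ρ : Assignment) (g : GVar) : eval F ρ g.toTm = g.evalA ρ := by
  cases g <;> rfl

theorem eval_lhs (F : Frame) (ρ : Assignment) (A : Axm) :
    eval F ρ A.lhs = F.app A.k A.a fun i => (A.args i).evalA ρ :=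
  congrArg (F.app A.k A.a) <| funext fun i => eval_toTm F ρ (A.args i)

theorem GVar.vars_toTm (g : GVar) : g.toTm.vars = g.vars := by
  cases g <;> rfl

theorem Axm.vars_lhs (A : Axm) : A.lhs.vars = A.lhsVars := by
  simp only [Axm.lhs, Tm.vars, GVar.vars_toTm, Axm.lhsVars]

noncomputable def Axm.instanceAssignment (A : Axm) (F : Frame) (ρ : Assignment) (σ : ℕ → Tm) :
    Assignment :=
  Finsupp.indicator A.vars fun x _ => eval F ρ (σ x)

theorem Axm.eval_instanceAssignment {A : Axm} (F : Frame) (ρ : Assignment) (σ : ℕ → Tm)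
    {t : Tm} (ht : t.vars ⊆ A.vars) :
    eval F (A.instanceAssignment F ρ σ) t = eval F ρ (t.msubst σ) :=
  (eval_msubst fun _ hx => (Finsupp.indicator_of_mem (ht hx) fun x _ => eval F ρ (σ x)).symm).symm

theorem Axm.eval_lhs_instanceAssignment (A : Axm) (F : Frame) (ρ : Assignment) (σ : ℕ → Tm) :
    eval F (A.instanceAssignment F ρ σ) A.lhs = eval F ρ (A.lhs.msubst σ) :=
  A.eval_instanceAssignment F ρ σ (A.vars_lhs ▸ Finset.subset_union_left)

theorem Axm.eval_rhs_instanceAssignment (A : Axm) (F : Frame) (ρ : Assignment) (σ : ℕ → Tm) :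
    eval F (A.instanceAssignment F ρ σ) A.rhs = eval F ρ (A.rhs.msubst σ) :=
  A.eval_instanceAssignment F ρ σ Finset.subset_union_right

theorem Axm.evalA_instanceAssignment (A : Axm) (F : Frame) (ρ : Assignment) (σ : ℕ → Tm)
    (i : Fin A.a) :
    (A.args i).evalA (A.instanceAssignment F ρ σ) = eval F ρ ((A.args i).toTm.msubst σ) := by
  rw [← eval_toTm F, A.eval_instanceAssignment F ρ σ]
  exact (GVar.vars_toTm _).trans_subset <| Finset.subset_union_left.trans' <|
    Finset.subset_biUnion_of_mem (fun i => (A.args i).vars) (Finset.mem_univ i)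

namespace GVar

theorem evalA_congr {ρ ρ' : Assignment} :
    ∀ {g : GVar}, (∀ y ∈ g.vars, ρ y = ρ' y) → g.evalA ρ = g.evalA ρ'
  | .var x, h | .s0 x, h | .s1 x, h => by simp [evalA, h x (Finset.mem_singleton_self x)]
  | .eps, _ => rfl

theorem approx_of_approx_evalA {ρ ρ' : Assignment} :
    ∀ {g : GVar}, Approx (g.evalA ρ) (g.evalA ρ') → ∀ y ∈ g.vars, Approx (ρ y) (ρ' y)
  | .var _, h, _, hy => by rw [Finset.mem_singleton.mp hy]; exact h
  | .s0 _, .b0 h, _, hy => by rw [Finset.mem_singleton.mp hy]; exact h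
  | .s1 _, .b1 h, _, hy => by rw [Finset.mem_singleton.mp hy]; exact h
  | .eps, _, _, hy => absurd hy (Finset.notMem_empty _)

theorem unif_of_approx_evalA {g h : GVar} {ρ ρ' : Assignment}
    (hgh : Approx (g.evalA ρ) (h.evalA ρ')) : g.unif h := by
  cases g <;> cases h <;> trivial

theorem exists_approx_evalA {ρ : Assignment} {c : D} :
    ∀ {g : GVar}, Compat c (g.evalA ρ) → ∃ ρ' : Assignment, (∀ y, Approx (ρ y) (ρ' y)) ∧
      (∀ y ∉ g.vars, ρ' y = ρ y) ∧ Approx c (g.evalA ρ')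
  | _, .inl h => ⟨ρ, fun y => Approx.refl _, fun _ _ => rfl, h⟩
  | .var x, .inr h => ⟨Finsupp.update ρ x c, approx_update_of_approx h,
      fun y hy => by simp [Finsupp.update_apply, Finset.mem_singleton.not.mp hy],
      by simp [evalA, Approx.refl]⟩
  | .eps, .inr .eps => ⟨ρ, fun y => Approx.refl _, fun _ _ => rfl, .eps⟩
  | .s0 x, .inr (.b0 (w := c') h) => ⟨Finsupp.update ρ x c',
      approx_update_of_approx h,
      fun y hy => by simp [Finsupp.update_apply, Finset.mem_singleton.not.mp hy],
      by simp [evalA, Approx.refl]⟩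
  | .s1 x, .inr (.b1 (w := c') h) => ⟨Finsupp.update ρ x c',
      approx_update_of_approx h,
      fun y hy => by simp [Finsupp.update_apply, Finset.mem_singleton.not.mp hy],
      by simp [evalA, Approx.refl]⟩

theorem exists_approx_evalA_family {n : ℕ} (g : Fin n → GVar)
    (hg : ∀ i j, i ≠ j → Disjoint (g i).vars (g j).vars) (ρ : Assignment) (c : Fin n → D)
    (hc : ∀ i, Compat (c i) ((g i).evalA ρ)) :
    ∃ ρ' : Assignment, (∀ y, Approx (ρ y) (ρ' y)) ∧ ∀ i, Approx (c i) ((g i).evalA ρ') := by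
  suffices ∀ s : Finset (Fin n), ∃ ρ' : Assignment, (∀ y, Approx (ρ y) (ρ' y)) ∧
      (∀ y, (∀ i ∈ s, y ∉ (g i).vars) → ρ' y = ρ y) ∧ ∀ i ∈ s, Approx (c i) ((g i).evalA ρ') by
    obtain ⟨ρ', hρ', -, hc'⟩ := this Finset.univ
    exact ⟨ρ', hρ', fun i => hc' i (Finset.mem_univ i)⟩
  intro s
  induction s using Finset.induction_on with
  | empty => exact ⟨ρ, fun y => Approx.refl _, fun _ _ => rfl, by simp⟩
  | insert j s hj ih =>
    obtain ⟨ρ₁, hρ₁, hout₁, hc₁⟩ := ih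
    have hfresh : ∀ i ∈ s, ∀ y ∈ (g j).vars, y ∉ (g i).vars := fun i hi y hy =>
      Finset.disjoint_left.mp (hg j i (ne_of_mem_of_not_mem hi hj).symm) hy
    have hj₁ : (g j).evalA ρ₁ = (g j).evalA ρ :=
      evalA_congr fun y hy => hout₁ y fun i hi => hfresh i hi y hy
    obtain ⟨ρ₂, hρ₂, hout₂, hc₂⟩ := exists_approx_evalA (hj₁ ▸ hc j)
    refine ⟨ρ₂, fun y => (hρ₁ y).trans (hρ₂ y), fun y hy => ?_, fun i hi => ?_⟩
    · rw [hout₂ y (hy j (Finset.mem_insert_self j s)),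
        hout₁ y fun i hi => hy i (Finset.mem_insert_of_mem hi)]
    · rcases Finset.mem_insert.mp hi with rfl | hi
      · exact hc₂
      · rw [evalA_congr fun y hy => hout₂ y fun hy' => hfresh i hi y hy' hy]
        exact hc₁ i hi

end GVar

def Axm.upd (A : Axm) (ρ : Assignment) (w : D) : Upd :=
  ⟨A.k, A.a, fun i => (A.args i).evalA ρ, w⟩

theorem compat_of_mem_of_compat_evalA {G : Frame} (hGc : G.Consistent) {A : Axm}
    (hdist : ∀ i j : Fin A.a, i ≠ j → Disjoint (A.args i).vars (A.args j).vars)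
    (hA : ∀ ρ, Approx (eval G ρ A.lhs) (eval G ρ A.rhs)) {ρ₀ : Assignment} {w : D}
    (hw : Approx w (eval G ρ₀ A.rhs)) {x : Fin A.a → D} {v : D}
    (hmem : (⟨A.k, A.a, (x, v)⟩ : Entry) ∈ G) (hx : ∀ i, Compat (x i) ((A.args i).evalA ρ₀)) :
    Compat v w := by
  obtain ⟨ρ₁, hρ₁, hx₁⟩ := GVar.exists_approx_evalA_family A.args hdist ρ₀ x hx
  have hv : Approx v (eval G ρ₁ A.rhs) := by
    refine (Frame.approx_app hGc ⟨x, hx₁, hmem⟩).trans ?_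
    rw [← eval_lhs]
    exact hA ρ₁
  exact compat_of_approx_of_approx hv (hw.trans (eval_mono hGc subset_rfl fun y _ => hρ₁ y))

theorem Frame.Consistent.apUpd_upd {G : Frame} (hGc : G.Consistent) {A : Axm}
    (hdist : ∀ i j : Fin A.a, i ≠ j → Disjoint (A.args i).vars (A.args j).vars)
    (hA : ∀ ρ, Approx (eval G ρ A.lhs) (eval G ρ A.rhs)) {ρ₀ : Assignment} {w : D}
    (hw₀ : w ≠ D.star) (hw : Approx w (eval G ρ₀ A.rhs)) :
    (G.apUpd (A.upd ρ₀ w)).Consistent := by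
  refine ⟨fun k a x v h => ?_, fun k a x x' v v' h h' hxx' => ?_⟩
  · rcases Finset.mem_insert.mp h with h | h
    · cases h
      exact hw₀
    · exact hGc.1 k a x v h
  · rcases Finset.mem_insert.mp h with h | h <;> rcases Finset.mem_insert.mp h' with h' | h'
    · cases h; cases h'
      exact Or.inl (Approx.refl w)
    · cases h
      exact (compat_of_mem_of_compat_evalA hGc hdist hA hw h' fun i => (hxx' i).symm).symm
    · cases h'
      exact compat_of_mem_of_compat_evalA hGc hdist hA hw h hxx'
    · exact hGc.2 k a x x' v v' h h' hxx'

theorem IsModel.apUpd_upd {Ax : Set Axm} (hAx : NiceAxioms Ax) {G : Frame}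
    (hGc : G.Consistent) (hGm : IsModel G Ax) {A : Axm} (hA : A ∈ Ax) {ρ₀ : Assignment}
    {w : D} (hw₀ : w ≠ D.star) (hw : Approx w (eval G ρ₀ A.rhs)) :
    IsModel (G.apUpd (A.upd ρ₀ w)) Ax := by
  have hHc := hGc.apUpd_upd (hAx.distinct A hA) (hGm A hA) hw₀ hw
  rintro ⟨k, a, args, rhs⟩ hB ρ₁
  rw [eval_lhs]
  refine Frame.app_approx_of_forall ?_
  rintro v ⟨x, hx, hmem⟩
  rcases Finset.mem_insert.mp hmem with h | h
  · cases h
    have hBA : A = ⟨A.k, A.a, args, rhs⟩ :=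
      hAx.unique A hA _ hB rfl rfl fun i => GVar.unif_of_approx_evalA (hx i)
    obtain ⟨kA, aA, argsA, rhsA⟩ := A
    cases hBA
    refine hw.trans (eval_mono hHc (Finset.subset_insert _ _) fun y hy => ?_)
    obtain ⟨i, -, hyi⟩ := Finset.mem_biUnion.mp (hAx.rhsVars _ hA hy)
    exact GVar.approx_of_approx_evalA (hx i) y hyi
  · have hv := Frame.approx_app hGc ⟨x, hx, h⟩
    rw [← eval_lhs] at hv
    exact (hv.trans (hGm _ hB ρ₁)).trans (eval_mono_frame hHc (Finset.subset_insert _ _) ρ₁ rhs)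

theorem Deriv.axiomsUsed_subset {Ax : Set Axm} {a b : Tm} :
    ∀ d : Deriv Ax a b, d.axiomsUsed ⊆ Ax
  | .ax _ hA _ => Set.singleton_subset_iff.mpr hA
  | .refl _ => Set.empty_subset _
  | .symm d => d.axiomsUsed_subset
  | .trans d₁ d₂ => Set.union_subset d₁.axiomsUsed_subset d₂.axiomsUsed_subset
  | .compat _ _ d => d.axiomsUsed_subset
  | .subst _ _ d => d.axiomsUsed_subset

theorem SubDeriv.axiomsUsed_subset {Ax : Set Axm} {a b c d : Tm} {e : Deriv Ax a b}
    {d' : Deriv Ax c d} (h : SubDeriv e d') : e.axiomsUsed ⊆ d'.axiomsUsed := by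
  induction h with
  | refl => exact subset_rfl
  | symm _ ih | compat _ _ _ ih | subst _ _ _ ih => exact ih
  | transL _ ih => exact ih.trans Set.subset_union_left
  | transR _ ih => exact ih.trans Set.subset_union_right

theorem SubDeriv.lh_le {Ax : Set Axm} {a b c d : Tm} {e : Deriv Ax a b}
    {d' : Deriv Ax c d} (h : SubDeriv e d') : e.lh ≤ d'.lh := by
  induction h with
  | refl => exact le_rfl
  | _ => simp only [Deriv.lh]; omega

theorem seqGauge_append (σ τ : List Upd) :
    seqGauge (σ ++ τ) = max (seqGauge σ) (seqGauge τ) := by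
  induction σ with
  | nil => simp [seqGauge]
  | cons u σ ih =>
    simp only [seqGauge, List.cons_append, List.map_cons, List.foldr_cons] at ih ⊢
    omega

theorem seqExt_append (σ τ : List Upd) : seqExt (σ ++ τ) = max (seqExt σ) (seqExt τ) := by
  induction σ with
  | nil => simp [seqExt]
  | cons u σ ih =>
    simp only [seqExt, List.cons_append, List.map_cons, List.foldr_cons] at ih ⊢
    omega

section UpdSeq

variable {Ax : Set Axm} {a b : Tm} {κ : ℕ} {d : Deriv Ax a b}

theorem IsUpdSeq.mono {a' b' : Tm} {d' : Deriv Ax a' b'} (h : d.axiomsUsed ⊆ d'.axiomsUsed) :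
    ∀ {F : Frame} {σ : List Upd}, IsUpdSeq κ d F σ → IsUpdSeq κ d' F σ
  | _, [], _ => trivial
  | _, _ :: _, ⟨⟨hw, hg, A, hA, ρ, hu⟩, hσ⟩ => ⟨⟨hw, hg, A, h hA, ρ, hu⟩, IsUpdSeq.mono h hσ⟩

theorem IsUpdSeq.append {σ τ : List Upd} :
    ∀ {F : Frame}, IsUpdSeq κ d F σ → IsUpdSeq κ d (F.apSeq σ) τ → IsUpdSeq κ d F (σ ++ τ) := by
  induction σ with
  | nil => exact fun _ h => h
  | cons u σ ih => exact fun hσ hτ => ⟨hσ.1, ih hσ.2 hτ⟩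

theorem IsUpdSeq.apSeq_consistent_isModel_of_subset (hAx : NiceAxioms Ax) :
    ∀ {σ : List Upd} {H G : Frame}, H ⊆ G → G.Consistent → IsModel G Ax →
      IsUpdSeq κ d H σ →
      (G.apSeq σ).Consistent ∧ IsModel (G.apSeq σ) Ax ∧ H.apSeq σ ⊆ G.apSeq σ
  | [], _, _, hHG, hGc, hGm, _ => ⟨hGc, hGm, hHG⟩
  | _ :: _, H, G, hHG, hGc, hGm, ⟨⟨hw₀, _, A, hA, ρ₀, hu⟩, hσ⟩ => by
    subst hu
    have hA' := d.axiomsUsed_subset hA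
    have hw := eval_mono_frame hGc hHG ρ₀ A.rhs
    exact IsUpdSeq.apSeq_consistent_isModel_of_subset hAx (H := H.apUpd _) (G := G.apUpd _)
      (Finset.insert_subset_insert _ hHG) (hGc.apUpd_upd (hAx.distinct A hA') (hGm A hA') hw₀ hw)
      (IsModel.apUpd_upd hAx hGc hGm hA' hw₀ hw) hσ

theorem IsUpdSeq.apSeq_consistent_isModel (hAx : NiceAxioms Ax) {G : Frame} {σ : List Upd}
    (hGc : G.Consistent) (hGm : IsModel G Ax) (hσ : IsUpdSeq κ d G σ) :
    (G.apSeq σ).Consistent ∧ IsModel (G.apSeq σ) Ax :=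
  (hσ.apSeq_consistent_isModel_of_subset hAx subset_rfl hGc hGm).imp_right And.left

end UpdSeq

section Claim

variable {Ax : Set Axm} {a b : Tm}

def ApproxByUpdates (κ : ℕ) (d : Deriv Ax a b) (n : ℕ) (t u : Tm) : Prop :=
  ∀ ⦃G : Frame⦄ ⦃ρ : Assignment⦄ ⦃M : ℕ⦄, G.Consistent → IsModel G Ax → G.gauge ≤ M →
    ρ.gauge ≤ M → M + n ≤ κ →
    ∃ σ : List Upd, IsUpdSeq κ d G σ ∧ seqExt σ ≤ n ∧ σ.length ≤ n ∧ seqGauge σ ≤ M + n ∧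
      Approx (eval G ρ t) (eval (G.apSeq σ) ρ u)

variable {κ : ℕ} {d : Deriv Ax a b} {n : ℕ} {t u : Tm}

theorem ApproxByUpdates.mono {a' b' : Tm} {d' : Deriv Ax a' b'} {n' : ℕ}
    (h : ApproxByUpdates κ d n t u) (hd : d.axiomsUsed ⊆ d'.axiomsUsed) (hn : n ≤ n') :
    ApproxByUpdates κ d' n' t u := by
  intro G ρ M hGc hGm hG hρ hκ
  obtain ⟨σ, hσ, he, hl, hg, happ⟩ := h hGc hGm hG hρ (by omega)
  exact ⟨σ, hσ.mono hd, he.trans hn, hl.trans hn, hg.trans (by omega), happ⟩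

theorem approxByUpdates_of_approx
    (h : ∀ (G : Frame) (ρ : Assignment), IsModel G Ax → Approx (eval G ρ t) (eval G ρ u)) :
    ApproxByUpdates κ d n t u :=
  fun G ρ _ _ hGm _ _ _ => ⟨[], trivial, Nat.zero_le _, Nat.zero_le _, Nat.zero_le _, h G ρ hGm⟩

theorem ApproxByUpdates.trans (hAx : NiceAxioms Ax) {n₁ n₂ : ℕ} {s : Tm}
    (h₁ : ApproxByUpdates κ d n₁ t s) (h₂ : ApproxByUpdates κ d n₂ s u) :
    ApproxByUpdates κ d (n₁ + n₂) t u := by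
  intro G ρ M hGc hGm hG hρ hκ
  obtain ⟨σ₁, hσ₁, he₁, hl₁, hg₁, happ₁⟩ := h₁ hGc hGm hG hρ (by omega)
  obtain ⟨hGc₁, hGm₁⟩ := hσ₁.apSeq_consistent_isModel hAx hGc hGm
  have hG₁ : (G.apSeq σ₁).gauge ≤ M + n₁ := (G.gauge_apSeq_le σ₁).trans (by omega)
  obtain ⟨σ₂, hσ₂, he₂, hl₂, hg₂, happ₂⟩ :=
    h₂ hGc₁ hGm₁ hG₁ (hρ.trans (Nat.le_add_right _ _)) (by omega)
  refine ⟨σ₁ ++ σ₂, hσ₁.append hσ₂, ?_, ?_, ?_, ?_⟩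
  · rw [seqExt_append]; omega
  · rw [List.length_append]; omega
  · rw [seqGauge_append]; omega
  · rw [Frame.apSeq_append]; exact happ₁.trans happ₂

theorem ApproxByUpdates.compat (hAx : NiceAxioms Ax) (s : Tm) (x : ℕ)
    (h : ApproxByUpdates κ d n t u) : ApproxByUpdates κ d n (s.subst x t) (s.subst x u) := by
  intro G ρ M hGc hGm hG hρ hκ
  obtain ⟨σ, hσ, he, hl, hg, happ⟩ := h hGc hGm hG hρ hκ
  refine ⟨σ, hσ, he, hl, hg, ?_⟩
  rw [eval_subst, eval_subst]
  exact eval_mono (hσ.apSeq_consistent_isModel hAx hGc hGm).1 (G.subset_apSeq σ) fun y _ =>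
    approx_update ρ x happ y

theorem ApproxByUpdates.subst (hAx : NiceAxioms Ax) (s : Tm) (x : ℕ)
    (h : ApproxByUpdates κ d n t u) :
    ApproxByUpdates κ d (n + s.lh) (t.subst x s) (u.subst x s) := by
  intro G ρ M hGc hGm hG hρ hκ
  have hρs : Assignment.gauge (Finsupp.update ρ x (eval G ρ s)) ≤ M + s.lh :=
    (ρ.gauge_update_le x _).trans (max_le (by omega) ((gauge_eval_le G ρ s).trans (by omega)))
  obtain ⟨σ, hσ, he, hl, hg, happ⟩ := h hGc hGm (hG.trans (Nat.le_add_right _ _)) hρs (by omega)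
  have hHc := (hσ.apSeq_consistent_isModel hAx hGc hGm).1
  refine ⟨σ, hσ, by omega, by omega, by omega, ?_⟩
  rw [eval_subst, eval_subst]
  exact happ.trans <| eval_mono hHc subset_rfl fun y _ =>
    approx_update ρ x (eval_mono_frame hHc (G.subset_apSeq σ) ρ s) y

theorem approxByUpdates_ax (A : Axm) (hA : A ∈ Ax) (σ : ℕ → Tm) :
    ApproxByUpdates κ (Deriv.ax A hA σ) n (A.lhs.msubst σ) (A.rhs.msubst σ) :=
  approxByUpdates_of_approx fun G ρ hGm => by
    rw [← A.eval_lhs_instanceAssignment, ← A.eval_rhs_instanceAssignment]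
    exact hGm A hA _

theorem Axm.gauge_upd_instanceAssignment_le (A : Axm) (G : Frame) (ρ : Assignment)
    (σ : ℕ → Tm) :
    (A.upd (A.instanceAssignment G ρ σ) (eval G (A.instanceAssignment G ρ σ) A.rhs)).gauge ≤
      max G.gauge ρ.gauge + (A.lhs.msubst σ).lh + (A.rhs.msubst σ).lh := by
  refine max_le (Finset.sup_le fun (i : Fin A.a) _ => ?_) ?_
  · have hlt : ((A.args i).toTm.msubst σ).lh < (A.lhs.msubst σ).lh :=
      Tm.lh_lt_lh_app A.k A.a (fun i => (A.args i).toTm.msubst σ) i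
    have := gauge_eval_le G ρ ((A.args i).toTm.msubst σ)
    change ((A.args i).evalA _).gauge ≤ _
    rw [A.evalA_instanceAssignment]
    omega
  · have := gauge_eval_le G ρ (A.rhs.msubst σ)
    change (eval G _ A.rhs).gauge ≤ _
    rw [A.eval_rhs_instanceAssignment]
    omega

theorem approxByUpdates_ax_symm (hAx : NiceAxioms Ax) (A : Axm) (hA : A ∈ Ax) (σ : ℕ → Tm) :
    ApproxByUpdates κ (Deriv.ax A hA σ) (Deriv.ax A hA σ).lh (A.rhs.msubst σ) (A.lhs.msubst σ) := by
  intro G ρ M hGc hGm hG hρ hκ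
  have hgauge := A.gauge_upd_instanceAssignment_le G ρ σ
  set ρ' := A.instanceAssignment G ρ σ
  have hlh : (Deriv.ax A hA σ).lh = (A.lhs.msubst σ).lh + (A.rhs.msubst σ).lh + 1 := rfl
  rw [← A.eval_rhs_instanceAssignment]
  by_cases hw₀ : eval G ρ' A.rhs = D.star
  · refine ⟨[], trivial, Nat.zero_le _, Nat.zero_le _, Nat.zero_le _, ?_⟩
    rw [hw₀]
    exact .star _
  set u := A.upd ρ' (eval G ρ' A.rhs)
  have hHc : (G.apUpd u).Consistent :=
    hGc.apUpd_upd (hAx.distinct A hA) (hGm A hA) hw₀ (Approx.refl _)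
  have hext : u.a < (A.lhs.msubst σ).lh := Tm.arity_lt_lh_app A.k A.a _
  refine ⟨[u], ⟨⟨hw₀, by omega, A, rfl, ρ', rfl⟩, trivial⟩, ?_, ?_, ?_, ?_⟩
  · simp only [seqExt, List.map_cons, List.map_nil, List.foldr_cons, List.foldr_nil]
    omega
  · simp only [List.length_singleton]
    omega
  · simp only [seqGauge, List.map_cons, List.map_nil, List.foldr_cons, List.foldr_nil]
    omega
  · refine Frame.approx_app hHc ⟨u.v, fun i => ?_, Finset.mem_insert_self _ _⟩
    change Approx ((A.args i).evalA ρ') _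
    rw [A.evalA_instanceAssignment]
    exact eval_mono_frame hHc (Finset.subset_insert _ _) ρ _

end Claim

theorem Deriv.approxByUpdates {Ax : Set Axm} (hAx : NiceAxioms Ax) {κ : ℕ} {t u : Tm}
    (d : Deriv Ax t u) : ApproxByUpdates κ d d.lh t u ∧ ApproxByUpdates κ d d.lh u t := by
  induction d with
  | ax A hA σ => exact ⟨approxByUpdates_ax A hA σ, approxByUpdates_ax_symm hAx A hA σ⟩
  | refl t => exact ⟨approxByUpdates_of_approx fun _ _ _ => Approx.refl _,
      approxByUpdates_of_approx fun _ _ _ => Approx.refl _⟩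
  | symm d ih =>
    have hlh : d.lh ≤ (Deriv.symm d).lh := by simp only [Deriv.lh]; omega
    exact ⟨ih.2.mono subset_rfl hlh, ih.1.mono subset_rfl hlh⟩
  | trans d₁ d₂ ih₁ ih₂ =>
    have hlh : d₁.lh + d₂.lh ≤ (Deriv.trans d₁ d₂).lh := by simp only [Deriv.lh]; omega
    have h₁ := fun {n t u} (h : ApproxByUpdates κ d₁ n t u) =>
      h.mono (d' := Deriv.trans d₁ d₂) Set.subset_union_left le_rfl
    have h₂ := fun {n t u} (h : ApproxByUpdates κ d₂ n t u) =>
      h.mono (d' := Deriv.trans d₁ d₂) Set.subset_union_right le_rfl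
    exact ⟨((h₁ ih₁.1).trans hAx (h₂ ih₂.1)).mono subset_rfl hlh,
      ((h₂ ih₂.2).trans hAx (h₁ ih₁.2)).mono subset_rfl (by omega)⟩
  | compat s x d ih =>
    have hlh : d.lh ≤ (Deriv.compat s x d).lh := by simp only [Deriv.lh]; omega
    exact ⟨(ih.1.compat hAx s x).mono subset_rfl hlh,
      (ih.2.compat hAx s x).mono subset_rfl hlh⟩
  | subst s x d ih =>
    have hlh : d.lh + s.lh ≤ (Deriv.subst s x d).lh := by simp only [Deriv.lh]; omega
    exact ⟨(ih.1.subst hAx s x).mono subset_rfl hlh,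
      (ih.2.subst hAx s x).mono subset_rfl hlh⟩

theorem IsUpdSeq.approx_eval_apSeq {Ax : Set Axm} (hAx : NiceAxioms Ax) {a b a' b' : Tm}
    {d : Deriv Ax a b} {d' : Deriv Ax a' b'} {κ κ' : ℕ} {F : Frame} (hFc : F.Consistent)
    (hM : IsModel F Ax) {σ τ : List Upd} (hσ : IsUpdSeq κ d F σ) (hτ : IsUpdSeq κ' d' F τ)
    (ρ : Assignment) (t : Tm) : Approx (eval (F.apSeq τ) ρ t) (eval ((F.apSeq σ).apSeq τ) ρ t) :=
  let ⟨hGc, hGm⟩ := hσ.apSeq_consistent_isModel hAx hFc hM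
  let ⟨hc, _, hsub⟩ := hτ.apSeq_consistent_isModel_of_subset hAx (F.subset_apSeq σ) hGc hGm
  eval_mono_frame hc hsub ρ t

theorem soundness_claim_general (Ax : Set Axm) (hAx : NiceAxioms Ax)
    {t₀ u₀ : Tm} (d : Deriv Ax t₀ u₀)
    (F : Frame) (hFc : F.Consistent) (hM : IsModel F Ax)
    (U : ℕ) (hU : F.gauge + d.lh ≤ U)
    {t u : Tm} (d₀ : Deriv Ax t u) (hsub : SubDeriv d₀ d)
    (ρ : Assignment)
    (σ : List Upd) (hσ : IsUpdSeq U d F σ)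
    (h₁ : ρ.gauge ≤ U - d₀.lh) :
    ∃ σ₁ σ₂ : List Upd,
      IsUpdSeq U d F σ₁ ∧ IsUpdSeq U d F σ₂ ∧
      seqExt σ₁ ≤ d₀.lh ∧ σ₁.length ≤ d₀.lh ∧
      seqExt σ₂ ≤ d₀.lh ∧ σ₂.length ≤ d₀.lh ∧
      seqGauge σ₁ ≤ max F.gauge (max (seqGauge σ) ρ.gauge) + d₀.lh ∧
      seqGauge σ₂ ≤ max F.gauge (max (seqGauge σ) ρ.gauge) + d₀.lh ∧
      Approx (eval F ρ t) (eval ((F.apSeq σ).apSeq σ₁) ρ u) ∧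
      Approx (eval F ρ u) (eval ((F.apSeq σ).apSeq σ₂) ρ t) := by
  have hlh := hsub.lh_le
  have hκ : max F.gauge ρ.gauge + d₀.lh ≤ U := by omega
  obtain ⟨hfwd, hbwd⟩ := d₀.approxByUpdates hAx (κ := U)
  obtain ⟨σ₁, hσ₁, he₁, hl₁, hg₁, happ₁⟩ :=
    hfwd hFc hM (le_max_left _ _) (le_max_right _ _) hκ
  obtain ⟨σ₂, hσ₂, he₂, hl₂, hg₂, happ₂⟩ :=
    hbwd hFc hM (le_max_left _ _) (le_max_right _ _) hκ
  exact ⟨σ₁, σ₂, hσ₁.mono hsub.axiomsUsed_subset, hσ₂.mono hsub.axiomsUsed_subset,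
    he₁, hl₁, he₂, hl₂, by omega, by omega,
    happ₁.trans (hσ.approx_eval_apSeq hAx hFc hM hσ₁ ρ u),
    happ₂.trans (hσ.approx_eval_apSeq hAx hFc hM hσ₂ ρ t)⟩

/-- Quantitative soundness claim: fix a derivation `d` in
Variable Normal Form, a model `F` of `Ax` and `U` with `G(F) + lh(d) ≤ U`.
Let `d₀ ⊢ t = u` be a sub-derivation of `d`, `ρ` an assignment with
`dom(ρ) ⊆ var(d)`, and `σ` a sequence of updates based on `F`, `U` and `d`
with `G(ρ), G(σ), E(σ), seqlh(σ) ≤ U − lh(d₀)`. Then there are sequences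
`σ₁`, `σ₂` of updates based on `F`, `U` and `d` with
`E(σᵢ), seqlh(σᵢ) ≤ lh(d₀)` and
`G(σᵢ) ≤ max(G(F), G(σ), G(ρ)) + lh(d₀)` such that, for `F' = F * σ`,
`⟦t⟧_{F,ρ} ⊑ ⟦u⟧_{F'*σ₁,ρ}` and `⟦u⟧_{F,ρ} ⊑ ⟦t⟧_{F'*σ₂,ρ}`. -/
theorem soundness_claim (Ax : Set Axm) (hAx : NiceAxioms Ax)
    {t₀ u₀ : Tm} (d : Deriv Ax t₀ u₀) (hVNF : d.VNF)
    (F : Frame) (hFc : F.Consistent) (hM : IsModel F Ax)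
    (U : ℕ) (hU : F.gauge + d.lh ≤ U)
    {t u : Tm} (d₀ : Deriv Ax t u) (hsub : SubDeriv d₀ d)
    (ρ : Assignment) (hdom : ρ.support ⊆ d.varsOf)
    (σ : List Upd) (hσ : IsUpdSeq U d F σ)
    (h₁ : ρ.gauge ≤ U - d₀.lh) (h₂ : seqGauge σ ≤ U - d₀.lh)
    (h₃ : seqExt σ ≤ U - d₀.lh) (h₄ : σ.length ≤ U - d₀.lh) :
    ∃ σ₁ σ₂ : List Upd,
      IsUpdSeq U d F σ₁ ∧ IsUpdSeq U d F σ₂ ∧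
      seqExt σ₁ ≤ d₀.lh ∧ σ₁.length ≤ d₀.lh ∧
      seqExt σ₂ ≤ d₀.lh ∧ σ₂.length ≤ d₀.lh ∧
      seqGauge σ₁ ≤ max F.gauge (max (seqGauge σ) ρ.gauge) + d₀.lh ∧
      seqGauge σ₂ ≤ max F.gauge (max (seqGauge σ) ρ.gauge) + d₀.lh ∧
      Approx (eval F ρ t) (eval ((F.apSeq σ).apSeq σ₁) ρ u) ∧
      Approx (eval F ρ u) (eval ((F.apSeq σ).apSeq σ₂) ρ t) :=
  soundness_claim_general Ax hAx d F hFc hM U hU d₀ hsub ρ σ hσ h₁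

end PETS
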